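/- For a nondegenerate model of walk and a point P of the kernel curve Ē_t, the following are equivalent: (i) P is a singular point of Ē_t; (ii) P is both the unique point of Ē_t sharing its first coordinate and the unique point of Ē_t sharing its second coordinate (i.e., P is fixed by both the vertical switch ι₁ and the horizontal switch ι₂ of Ē_t). -/

import Mathlib

open MvPolynomial

noncomputable section

variable (d : ℤ → ℤ → ℝ) (t : ℝ)

/-- The kernel polynomial `K(x,y,t) = xy(1 - t·Σ_{(i,j)∈{-1,0,1}²} d_{i,j} x^i y^j)`
as an element of `ℂ[x,y] = MvPolynomial (Fin 2) ℂ` (variable `0` is `x`, variable `1` is `y`). -/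
def kernelK : MvPolynomial (Fin 2) ℂ :=
  X 0 * X 1 - C ((t : ℝ) : ℂ) *
    ∑ i ∈ Finset.range 3, ∑ j ∈ Finset.range 3,
      C ((d ((i : ℤ) - 1) ((j : ℤ) - 1) : ℝ) : ℂ) * X 0 ^ i * X 1 ^ j

/-- The standing hypotheses: the weights `d_{i,j}` for `(i,j) ∈ {-1,0,1}²` lie in `[0,1]`
and sum to `1`, `t ∈ (0,1)`, and `t` is transcendental over `ℚ(d_{i,j})`, i.e. no nonzero
polynomial with coefficients in the subfield of `ℝ` generated by the `d_{i,j}` vanishes at `t`. -/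
def WalkHyp : Prop :=
  (∀ i ∈ ({-1, 0, 1} : Set ℤ), ∀ j ∈ ({-1, 0, 1} : Set ℤ), 0 ≤ d i j ∧ d i j ≤ 1) ∧
  (∑ i ∈ ({-1, 0, 1} : Finset ℤ), ∑ j ∈ ({-1, 0, 1} : Finset ℤ), d i j = 1) ∧
  (0 < t ∧ t < 1) ∧
  (∀ p : Polynomial ℝ,
      (∀ n, p.coeff n ∈
        Subfield.closure
          {x : ℝ | ∃ i ∈ ({-1, 0, 1} : Set ℤ), ∃ j ∈ ({-1, 0, 1} : Set ℤ), x = d i j}) →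
      Polynomial.eval t p = 0 → p = 0)

/-- The model is degenerate if `K` is reducible in `ℂ[x,y]`, or has degree `≤ 1` in `x`,
or degree `≤ 1` in `y`. -/
def Degenerate : Prop :=
  ¬ Irreducible (kernelK d t) ∨
    degreeOf 0 (kernelK d t) ≤ 1 ∨ degreeOf 1 (kernelK d t) ≤ 1

/-- The bihomogenized kernel
`K̄(x₀,x₁,y₀,y₁) = x₀x₁y₀y₁ - t Σ_{i,j=0}^{2} d_{i-1,j-1} x₀^i x₁^{2-i} y₀^j y₁^{2-j}`,
with variables `0 ↦ x₀`, `1 ↦ x₁`, `2 ↦ y₀`, `3 ↦ y₁`. -/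
def kernelKbar : MvPolynomial (Fin 4) ℂ :=
  X 0 * X 1 * X 2 * X 3 - C ((t : ℝ) : ℂ) *
    ∑ i ∈ Finset.range 3, ∑ j ∈ Finset.range 3,
      C ((d ((i : ℤ) - 1) ((j : ℤ) - 1) : ℝ) : ℂ) *
        X 0 ^ i * X 1 ^ (2 - i) * X 2 ^ j * X 3 ^ (2 - j)

/-- `([a:b],[c:e])` lies on the kernel curve `Ē_t ⊆ ℙ¹(ℂ)×ℙ¹(ℂ)`. -/
def OnKernelCurve (a b c e : ℂ) : Prop :=
  eval ![a, b, c, e] (kernelKbar d t) = 0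

/-- `([a:b],[c:e])` is a singular point of the kernel curve `Ē_t`: it lies on `Ē_t`
and all four partial derivatives of `K̄` vanish there. -/
def SingularAt (a b c e : ℂ) : Prop :=
  OnKernelCurve d t a b c e ∧
    ∀ k : Fin 4, eval ![a, b, c, e] (pderiv k (kernelKbar d t)) = 0

/-- `Ā₁(x₀,x₁)`: the coefficient of `y₀²` in `K̄`. -/
def Abar1 : MvPolynomial (Fin 2) ℂ :=
  -(C ((t : ℝ) : ℂ)) *
    (C ((d (-1) 1 : ℝ) : ℂ) * X 1 ^ 2 + C ((d 0 1 : ℝ) : ℂ) * X 0 * X 1 +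
      C ((d 1 1 : ℝ) : ℂ) * X 0 ^ 2)

/-- `B̄₁(x₀,x₁)`: the coefficient of `y₀y₁` in `K̄`. -/
def Bbar1 : MvPolynomial (Fin 2) ℂ :=
  X 0 * X 1 - C ((t : ℝ) : ℂ) *
    (C ((d (-1) 0 : ℝ) : ℂ) * X 1 ^ 2 + C ((d 0 0 : ℝ) : ℂ) * X 0 * X 1 +
      C ((d 1 0 : ℝ) : ℂ) * X 0 ^ 2)

/-- `C̄₁(x₀,x₁)`: the coefficient of `y₁²` in `K̄`. -/
def Cbar1 : MvPolynomial (Fin 2) ℂ :=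
  -(C ((t : ℝ) : ℂ)) *
    (C ((d (-1) (-1) : ℝ) : ℂ) * X 1 ^ 2 + C ((d 0 (-1) : ℝ) : ℂ) * X 0 * X 1 +
      C ((d 1 (-1) : ℝ) : ℂ) * X 0 ^ 2)

/-- The discriminant `Δ₁(x₀,x₁) = B̄₁² - 4Ā₁C̄₁`, homogeneous of degree 4. -/
def Delta1 : MvPolynomial (Fin 2) ℂ :=
  Bbar1 d t ^ 2 - 4 * Abar1 d t * Cbar1 d t

/-- `Ā₂(y₀,y₁)`: the coefficient of `x₀²` in `K̄`. -/
def Abar2 : MvPolynomial (Fin 2) ℂ :=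
  -(C ((t : ℝ) : ℂ)) *
    (C ((d 1 (-1) : ℝ) : ℂ) * X 1 ^ 2 + C ((d 1 0 : ℝ) : ℂ) * X 0 * X 1 +
      C ((d 1 1 : ℝ) : ℂ) * X 0 ^ 2)

/-- `B̄₂(y₀,y₁)`: the coefficient of `x₀x₁` in `K̄`. -/
def Bbar2 : MvPolynomial (Fin 2) ℂ :=
  X 0 * X 1 - C ((t : ℝ) : ℂ) *
    (C ((d 0 (-1) : ℝ) : ℂ) * X 1 ^ 2 + C ((d 0 0 : ℝ) : ℂ) * X 0 * X 1 +
      C ((d 0 1 : ℝ) : ℂ) * X 0 ^ 2)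

/-- `C̄₂(y₀,y₁)`: the coefficient of `x₁²` in `K̄`. -/
def Cbar2 : MvPolynomial (Fin 2) ℂ :=
  -(C ((t : ℝ) : ℂ)) *
    (C ((d (-1) (-1) : ℝ) : ℂ) * X 1 ^ 2 + C ((d (-1) 0 : ℝ) : ℂ) * X 0 * X 1 +
      C ((d (-1) 1 : ℝ) : ℂ) * X 0 ^ 2)

/-- The discriminant `Δ₂(y₀,y₁) = B̄₂² - 4Ā₂C̄₂`, homogeneous of degree 4. -/
def Delta2 : MvPolynomial (Fin 2) ℂ :=
  Bbar2 d t ^ 2 - 4 * Abar2 d t * Cbar2 d t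

/-- `[a:b] ∈ ℙ¹(ℂ)` is a double root of the homogeneous polynomial `p`:
`(bX - aY)²` divides `p(X,Y)`. -/
def IsDoubleRootAt (a b : ℂ) (p : MvPolynomial (Fin 2) ℂ) : Prop :=
  (C b * X 0 - C a * X 1) ^ 2 ∣ p

/-- The step set of the model is included in a closed half plane whose boundary passes
through the origin. -/
def StepSetInHalfPlane : Prop :=
  ∃ u v : ℝ, (u, v) ≠ (0, 0) ∧
    ∀ i ∈ ({-1, 0, 1} : Set ℤ), ∀ j ∈ ({-1, 0, 1} : Set ℤ),
      (i, j) ≠ (0, 0) → d i j ≠ 0 → 0 ≤ u * (i : ℝ) + v * (j : ℝ)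

/-- `α₂ = β₂` for the first family of (G0). -/
def alpha2 : ℝ := 1 - 2*t*(d 0 0) + t^2*(d 0 0)^2 - 4*t^2*(d (-1) 1)*(d 1 (-1))

/-- `α₃` for the first family of (G0). -/
def alpha3 : ℝ := 2*t^2*(d 1 0)*(d 0 0) - 2*t*(d 1 0) - 4*t^2*(d 0 1)*(d 1 (-1))

/-- `α₄` for the first family of (G0). -/
def alpha4 : ℝ := t^2*((d 1 0)^2 - 4*(d 1 1)*(d 1 (-1)))

/-- `β₃` for the first family of (G0). -/
def beta3 : ℝ := 2*t^2*(d 0 1)*(d 0 0) - 2*t*(d 0 1) - 4*t^2*(d 1 0)*(d (-1) 1)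

/-- `β₄` for the first family of (G0). -/
def beta4 : ℝ := t^2*((d 0 1)^2 - 4*(d 1 1)*(d (-1) 1))

/-- The kernel polynomial as a function `ℂ × ℂ → ℂ`:
`K(x,y,t) = xy - t Σ_{i,j=0}^{2} d_{i-1,j-1} x^i y^j`. -/
def kernelKfun (x y : ℂ) : ℂ :=
  x * y - ((t : ℝ) : ℂ) *
    ∑ i ∈ Finset.range 3, ∑ j ∈ Finset.range 3,
      ((d ((i : ℤ) - 1) ((j : ℤ) - 1) : ℝ) : ℂ) * x ^ i * y ^ j

/-!
Fix the first coordinate `[a:b]` of `P = ([a:b],[c:e])`. Then `K̄(a,b,·,·)` is a binary quadratic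
form in `(y₀,y₁)` whose roots are the points of `Ē_t` above `[a:b]`, and `ι₁` exchanges them; so
`P` is fixed by `ι₁` iff `[c:e]` is a double root, i.e. iff `∂K̄/∂y₀` and `∂K̄/∂y₁` vanish at `P`,
as long as the form is not identically zero. Nondegeneracy excludes that: otherwise the line
`{[a:b]} × ℙ¹` lies on `Ē_t`, so either `b x - a` divides the irreducible `K`, forcing
`deg_y K = 0`, or `b = 0` and `K` has no `x²` terms. Transposing the weights exchanges `x` and `y`
and gives the same statement for `ι₂` and the other two partial derivatives.
-/

section BinaryQuadraticForm

variable {F : Type*} [Field F] {A B C c e : F}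

theorem quadratic_grad_eq_zero_of_unique_root (hce : (c, e) ≠ (0, 0))
    (hroot : A * c ^ 2 + B * c * e + C * e ^ 2 = 0)
    (huniq : ∀ c' e' : F, (c', e') ≠ (0, 0) → A * c' ^ 2 + B * c' * e' + C * e' ^ 2 = 0 →
      ∃ mu : F, mu ≠ 0 ∧ c' = mu * c ∧ e' = mu * e) :
    2 * A * c + B * e = 0 ∧ B * c + 2 * C * e = 0 := by
  rcases eq_or_ne e 0 with rfl | he
  · have hc : c ≠ 0 := by simpa using hce
    have hA : A = 0 := by simpa [hc] using hroot
    have hB : B = 0 := by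
      by_contra hB
      -- `(C, -B)` is the second root
      obtain ⟨mu, -, -, h⟩ := huniq C (-B) (by simp [hB]) (by rw [hA]; ring)
      exact hB (by simpa using h)
    simp [hA, hB]
  · have hA : A ≠ 0 := by
      rintro rfl
      obtain ⟨mu, hmu, -, h⟩ := huniq 1 0 (by simp) (by simp)
      exact mul_ne_zero hmu he h.symm
    -- Vieta: `(-(B e + A c), A e)` is the second root
    obtain ⟨mu, -, h₁, h₂⟩ := huniq (-(B * e + A * c)) (A * e) (by simp [hA, he])
      (by linear_combination A ^ 2 * hroot)
    rw [← mul_right_cancel₀ he h₂] at h₁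
    have hgrad : 2 * A * c + B * e = 0 := by linear_combination -h₁
    refine ⟨hgrad, mul_right_cancel₀ he ?_⟩
    linear_combination 2 * hroot - c * hgrad

theorem exists_proportional_of_mul_eq_mul {c e c' e' : F} (hce : (c, e) ≠ (0, 0))
    (hce' : (c', e') ≠ (0, 0)) (h : c' * e = c * e') :
    ∃ mu : F, mu ≠ 0 ∧ c' = mu * c ∧ e' = mu * e := by
  rcases eq_or_ne c 0 with rfl | hc
  · have he : e ≠ 0 := by simpa using hce
    have hc' : c' = 0 := by simpa [he] using h
    subst hc'
    exact ⟨e' / e, div_ne_zero (by simpa using hce') he, by simp, by field_simp⟩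
  · refine ⟨c' / c, div_ne_zero ?_ hc, by field_simp, by field_simp; linear_combination -h⟩
    rintro rfl
    exact hce' (by simp_all)

theorem quadratic_unique_root_of_grad_eq_zero [NeZero (2 : F)] (hQ : (A, B, C) ≠ (0, 0, 0))
    (hce : (c, e) ≠ (0, 0)) (hgrad : 2 * A * c + B * e = 0 ∧ B * c + 2 * C * e = 0) :
    ∀ c' e' : F, (c', e') ≠ (0, 0) → A * c' ^ 2 + B * c' * e' + C * e' ^ 2 = 0 →
      ∃ mu : F, mu ≠ 0 ∧ c' = mu * c ∧ e' = mu * e := by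
  obtain ⟨g₁, g₂⟩ := hgrad
  intro c' e' hce' hroot'
  refine exists_proportional_of_mul_eq_mul hce hce'
    (sub_eq_zero.1 ((pow_eq_zero_iff two_ne_zero).1 ?_))
  -- `2 (c' e - c e')²` times each coefficient is a combination of the gradient and `Q(c', e')`
  have hA : 2 * A * (c' * e - c * e') ^ 2 = 0 := by
    linear_combination
      (-2 * c' * e' * e + e' ^ 2 * c) * g₁ - e' ^ 2 * e * g₂ + 2 * e ^ 2 * hroot'
  have hB : 2 * B * (c' * e - c * e') ^ 2 = 0 := by
    linear_combination 2 * c' ^ 2 * e * g₁ + 2 * c * e' ^ 2 * g₂ - 4 * c * e * hroot'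
  have hC : 2 * C * (c' * e - c * e') ^ 2 = 0 := by
    linear_combination
      (-2 * c' * e' * c + c' ^ 2 * e) * g₂ - c' ^ 2 * c * g₁ + 2 * c ^ 2 * hroot'
  by_contra hD
  simp_all [two_ne_zero]

end BinaryQuadraticForm

section KernelCurve

variable {d t}

theorem eval_kernelKbar_eq_quadratic_y (a b c e : ℂ) :
    eval ![a, b, c, e] (kernelKbar d t) =
      eval ![a, b] (Abar1 d t) * c ^ 2 + eval ![a, b] (Bbar1 d t) * c * e +
        eval ![a, b] (Cbar1 d t) * e ^ 2 := by
  simp [kernelKbar, Abar1, Bbar1, Cbar1, Finset.sum_range_succ]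
  ring

theorem eval_kernelKbar_eq_quadratic_x (a b c e : ℂ) :
    eval ![a, b, c, e] (kernelKbar d t) =
      eval ![c, e] (Abar2 d t) * a ^ 2 + eval ![c, e] (Bbar2 d t) * a * b +
        eval ![c, e] (Cbar2 d t) * b ^ 2 := by
  simp [kernelKbar, Abar2, Bbar2, Cbar2, Finset.sum_range_succ]
  ring

theorem eval_pderiv_zero_kernelKbar (a b c e : ℂ) :
    eval ![a, b, c, e] (pderiv 0 (kernelKbar d t)) =
      2 * eval ![c, e] (Abar2 d t) * a + eval ![c, e] (Bbar2 d t) * b := by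
  simp [kernelKbar, Abar2, Bbar2, Finset.sum_range_succ, pderiv_X]
  ring

theorem eval_pderiv_one_kernelKbar (a b c e : ℂ) :
    eval ![a, b, c, e] (pderiv 1 (kernelKbar d t)) =
      eval ![c, e] (Bbar2 d t) * a + 2 * eval ![c, e] (Cbar2 d t) * b := by
  simp [kernelKbar, Bbar2, Cbar2, Finset.sum_range_succ, pderiv_X]
  ring

theorem eval_pderiv_two_kernelKbar (a b c e : ℂ) :
    eval ![a, b, c, e] (pderiv 2 (kernelKbar d t)) =
      2 * eval ![a, b] (Abar1 d t) * c + eval ![a, b] (Bbar1 d t) * e := by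
  simp [kernelKbar, Abar1, Bbar1, Finset.sum_range_succ, pderiv_X]
  ring

theorem eval_pderiv_three_kernelKbar (a b c e : ℂ) :
    eval ![a, b, c, e] (pderiv 3 (kernelKbar d t)) =
      eval ![a, b] (Bbar1 d t) * c + 2 * eval ![a, b] (Cbar1 d t) * e := by
  simp [kernelKbar, Bbar1, Cbar1, Finset.sum_range_succ, pderiv_X]
  ring

theorem ne_zero_of_not_degenerate (hnd : ¬ Degenerate d t) : t ≠ 0 := by
  rintro rfl
  refine hnd (Or.inr (Or.inl ?_))
  grw [kernelK, Complex.ofReal_zero, C_0, zero_mul, sub_zero, degreeOf_mul_le]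
  simp [degreeOf_X]

theorem degreeOf_zero_kernelK_le_one (hneg : d 1 (-1) = 0) (hzero : d 1 0 = 0)
    (hpos : d 1 1 = 0) : degreeOf 0 (kernelK d t) ≤ 1 := by
  grw [kernelK, degreeOf_sub_le, degreeOf_C_mul_le, degreeOf_sum_le]
  refine max_le (by grw [degreeOf_mul_le]; simp [degreeOf_X]) (Finset.sup_le fun i hi => ?_)
  grw [degreeOf_sum_le]
  refine Finset.sup_le fun j hj => ?_
  simp only [Finset.mem_range] at hi hj
  rcases (show i ≤ 1 ∨ i = 2 by omega) with hi | rfl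
  · grw [degreeOf_mul_le, degreeOf_mul_le]
    simpa [degreeOf_X_pow_of_ne, degreeOf_C] using hi
  · interval_cases j <;> simp [hneg, hzero, hpos]

variable (d t) in
theorem exists_C_sq_mul_kernelK_eq (a b : ℂ) :
    ∃ G, C (b ^ 2) * kernelK d t = (C b * X 0 - C a) * G +
      (C (eval ![a, b] (Abar1 d t)) * X 1 ^ 2 + C (eval ![a, b] (Bbar1 d t)) * X 1 +
        C (eval ![a, b] (Cbar1 d t))) := by
  -- writing `K = α x² + β x + γ`, the quotient is `(b x + a) α + b β`
  refine ⟨(C b * X 0 + C a) * -C (t : ℂ) *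
      (C (d 1 (-1) : ℂ) + C (d 1 0 : ℂ) * X 1 + C (d 1 1 : ℂ) * X 1 ^ 2) +
    C b * (X 1 - C (t : ℂ) *
      (C (d 0 (-1) : ℂ) + C (d 0 0 : ℂ) * X 1 + C (d 0 1 : ℂ) * X 1 ^ 2)), ?_⟩
  simp [kernelK, Abar1, Bbar1, Cbar1, Finset.sum_range_succ]
  ring

theorem quadratic_y_ne_zero_of_not_degenerate (hnd : ¬ Degenerate d t) {a b : ℂ}
    (hab : (a, b) ≠ (0, 0)) :
    (eval ![a, b] (Abar1 d t), eval ![a, b] (Bbar1 d t), eval ![a, b] (Cbar1 d t)) ≠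
      (0, 0, 0) := by
  simp only [ne_eq, Prod.mk.injEq, not_and]
  intro hA hB hC
  rcases eq_or_ne b 0 with rfl | hb
  · have ha : a ≠ 0 := by simpa using hab
    have ht : (t : ℂ) ≠ 0 := by exact_mod_cast ne_zero_of_not_degenerate hnd
    refine hnd (Or.inr (Or.inl (degreeOf_zero_kernelK_le_one ?_ ?_ ?_)))
    · simpa [Cbar1, ha, ht] using hC
    · simpa [Bbar1, ha, ht] using hB
    · simpa [Abar1, ha, ht] using hA
  · obtain ⟨G, hG⟩ := exists_C_sq_mul_kernelK_eq d t a b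
    simp only [hA, hB, hC, C_0, zero_mul, add_zero] at hG
    have hK : kernelK d t = (C b * X 0 - C a) * (C (b ^ 2)⁻¹ * G) := by
      rw [mul_left_comm, ← hG, ← mul_assoc, ← C_mul, inv_mul_cancel₀ (pow_ne_zero 2 hb),
        C_1, one_mul]
    rcases (not_not.1 (not_or.1 hnd).1).isUnit_or_isUnit hK with hu | hu
    · exact (hu.map (eval ![a / b, 0])).ne_zero (by simp [mul_div_cancel₀ a hb])
    · rw [isUnit_iff_totalDegree_of_isReduced] at hu
      refine hnd (Or.inr (Or.inr ?_))
      grw [hK, degreeOf_mul_le, degreeOf_sub_le, degreeOf_C_mul_le,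
        degreeOf_le_totalDegree (_ * G), hu.2]
      simp [degreeOf_C, degreeOf_X]

theorem kernelK_swap :
    kernelK (Function.swap d) t = rename (Equiv.swap 0 1) (kernelK d t) := by
  simp [kernelK, Finset.sum_range_succ]
  ring

theorem degenerate_swap_iff : Degenerate (Function.swap d) t ↔ Degenerate d t := by
  set σ : Fin 2 ≃ Fin 2 := Equiv.swap 0 1
  have hirr : Irreducible (rename σ (kernelK d t)) ↔ Irreducible (kernelK d t) :=
    MulEquiv.irreducible_iff (renameEquiv ℂ σ).toMulEquiv
  have hdeg (i : Fin 2) : degreeOf (σ i) (rename σ (kernelK d t)) = degreeOf i (kernelK d t) :=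
    degreeOf_rename_of_injective σ.injective i
  have hdeg0 := hdeg 0
  have hdeg1 := hdeg 1
  simp only [σ, Equiv.swap_apply_left, Equiv.swap_apply_right] at hdeg0 hdeg1
  rw [Degenerate, Degenerate, kernelK_swap, hirr, hdeg0, hdeg1, or_comm (a := degreeOf 1 _ ≤ 1)]

theorem fixed_by_vertical_switch_iff {a b c e : ℂ} (hnd : ¬ Degenerate d t)
    (hab : (a, b) ≠ (0, 0)) (hce : (c, e) ≠ (0, 0)) (hon : OnKernelCurve d t a b c e) :
    (∀ c' e' : ℂ, (c', e') ≠ (0, 0) → OnKernelCurve d t a b c' e' →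
        ∃ mu : ℂ, mu ≠ 0 ∧ c' = mu * c ∧ e' = mu * e) ↔
      eval ![a, b, c, e] (pderiv 2 (kernelKbar d t)) = 0 ∧
        eval ![a, b, c, e] (pderiv 3 (kernelKbar d t)) = 0 := by
  simp only [OnKernelCurve, eval_kernelKbar_eq_quadratic_y] at hon ⊢
  rw [eval_pderiv_two_kernelKbar, eval_pderiv_three_kernelKbar]
  exact ⟨quadratic_grad_eq_zero_of_unique_root hce hon,
    quadratic_unique_root_of_grad_eq_zero (quadratic_y_ne_zero_of_not_degenerate hnd hab) hce⟩

theorem fixed_by_horizontal_switch_iff {a b c e : ℂ} (hnd : ¬ Degenerate d t)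
    (hab : (a, b) ≠ (0, 0)) (hce : (c, e) ≠ (0, 0)) (hon : OnKernelCurve d t a b c e) :
    (∀ a' b' : ℂ, (a', b') ≠ (0, 0) → OnKernelCurve d t a' b' c e →
        ∃ lam : ℂ, lam ≠ 0 ∧ a' = lam * a ∧ b' = lam * b) ↔
      eval ![a, b, c, e] (pderiv 0 (kernelKbar d t)) = 0 ∧
        eval ![a, b, c, e] (pderiv 1 (kernelKbar d t)) = 0 := by
  -- `Abar1`, `Bbar1`, `Cbar1` of the transposed model are `Abar2`, `Bbar2`, `Cbar2`
  have hQ : (eval ![c, e] (Abar2 d t), eval ![c, e] (Bbar2 d t), eval ![c, e] (Cbar2 d t)) ≠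
      (0, 0, 0) :=
    quadratic_y_ne_zero_of_not_degenerate (degenerate_swap_iff.not.2 hnd) hce
  simp only [OnKernelCurve, eval_kernelKbar_eq_quadratic_x] at hon ⊢
  rw [eval_pderiv_zero_kernelKbar, eval_pderiv_one_kernelKbar]
  exact ⟨quadratic_grad_eq_zero_of_unique_root hab hon,
    quadratic_unique_root_of_grad_eq_zero hQ hab⟩

end KernelCurve

theorem singular_iff_fixed_by_both_switches (hnd : ¬ Degenerate d t)
    (a b c e : ℂ) (hab : (a, b) ≠ (0, 0)) (hce : (c, e) ≠ (0, 0))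
    (hon : OnKernelCurve d t a b c e) :
    SingularAt d t a b c e ↔
      ((∀ c' e' : ℂ, (c', e') ≠ (0, 0) → OnKernelCurve d t a b c' e' →
          ∃ mu : ℂ, mu ≠ 0 ∧ c' = mu * c ∧ e' = mu * e) ∧
       (∀ a' b' : ℂ, (a', b') ≠ (0, 0) → OnKernelCurve d t a' b' c e →
          ∃ lam : ℂ, lam ≠ 0 ∧ a' = lam * a ∧ b' = lam * b)) := by
  rw [fixed_by_vertical_switch_iff hnd hab hce hon, fixed_by_horizontal_switch_iff hnd hab hce hon]
  constructor
  · rintro ⟨-, h⟩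
    exact ⟨⟨h 2, h 3⟩, h 0, h 1⟩
  · rintro ⟨⟨h₂, h₃⟩, h₀, h₁⟩
    refine ⟨hon, fun k => ?_⟩
    match k with
    | 0 => exact h₀
    | 1 => exact h₁
    | 2 => exact h₂
    | 3 => exact h₃

end
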